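/- arXiv:2404.02703 — 4 statements merged into one kernel-verified Lean document; each statement's English description precedes it below -/
import Mathlib

section
/- Let f : ℝⁿ → ℝ be smooth, p ∈ (1, ∞) with conjugate exponent q, and u : I → ℝⁿ a smooth curve. Then u satisfies ‖u'(t)‖^{p-2} • u'(t) = -∇f(u(t)) for all t ∈ I if and only if (f ∘ u)'(t) ≤ -(1/p)‖u'(t)‖^p - (1/q)‖∇f(u(t))‖^q for all t ∈ I. -/
open Set

/-- Strict weighted AM-GM for two points, from strict concavity of `log`. -/
lemma young_strict_aux {x y p q : ℝ} (hx : 0 ≤ x) (hy : 0 ≤ y)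
    (hpq : Real.HolderConjugate p q) (hne : x ≠ y) :
    x ^ (1 / p) * y ^ (1 / q) < x / p + y / q := by
  rcases eq_or_lt_of_le hx with hx0 | hx0
  · rcases eq_or_lt_of_le hy with hy0 | hy0
    · exact absurd (hx0.symm.trans hy0) hne
    · rw [← hx0, Real.zero_rpow hpq.one_div_ne_zero, zero_mul, zero_div, zero_add]
      exact div_pos hy0 hpq.symm.pos
  · rcases eq_or_lt_of_le hy with hy0 | hy0
    · rw [← hy0, Real.zero_rpow hpq.symm.one_div_ne_zero, mul_zero, zero_div, add_zero]
      exact div_pos hx0 hpq.pos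
  -- both positive
    have key := strictConcaveOn_log_Ioi.2 (Set.mem_Ioi.2 hx0) (Set.mem_Ioi.2 hy0) hne
        hpq.one_div_pos hpq.symm.one_div_pos (by rw [one_div, one_div]; exact hpq.inv_add_inv_eq_one)
    have h1 : x ^ (1 / p) * y ^ (1 / q) =
        Real.exp ((1 / p) * Real.log x + (1 / q) * Real.log y) := by
      rw [Real.exp_add, Real.rpow_def_of_pos hx0, Real.rpow_def_of_pos hy0,
        mul_comm (Real.log x), mul_comm (Real.log y)]
    have h2 : (0:ℝ) < (1 / p) • x + (1 / q) • y := by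
      have := hpq.one_div_pos
      have := hpq.symm.one_div_pos
      positivity
    have h3 := Real.exp_lt_exp.2 key
    rw [Real.exp_log h2] at h3
    rw [h1]
    calc Real.exp ((1 / p) * Real.log x + (1 / q) * Real.log y)
        < (1 / p) • x + (1 / q) • y := by
          simpa [smul_eq_mul] using h3
      _ = x / p + y / q := by
          simp [smul_eq_mul, div_eq_mul_inv, mul_comm]

/-- Equality case in Young's inequality. -/
lemma young_eq_aux {a b p q : ℝ} (ha : 0 ≤ a) (hb : 0 ≤ b)
    (hpq : Real.HolderConjugate p q) (h : a * b = a ^ p / p + b ^ q / q) :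
    b ^ q = a ^ p := by
  by_contra hne
  have hab : a * b = (a ^ p) ^ (1 / p) * (b ^ q) ^ (1 / q) := by
    rw [← Real.rpow_mul ha, ← Real.rpow_mul hb,
      mul_one_div, mul_one_div, div_self hpq.ne_zero, div_self hpq.symm.ne_zero,
      Real.rpow_one, Real.rpow_one]
  have := young_strict_aux (Real.rpow_nonneg ha p) (Real.rpow_nonneg hb q) hpq
    (fun hxy => hne hxy.symm)
  rw [← hab] at this
  exact absurd h (ne_of_lt this)

theorem stmt0 {n : ℕ} (f : EuclideanSpace ℝ (Fin n) → ℝ) (hf : ContDiff ℝ (⊤ : ℕ∞) f)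
    (p q : ℝ) (hp : 1 < p) (hpq : 1 / p + 1 / q = 1)
    (I : Set ℝ) (u : ℝ → EuclideanSpace ℝ (Fin n)) (hu : ContDiff ℝ (⊤ : ℕ∞) u) :
    (∀ t ∈ I, ‖deriv u t‖ ^ (p - 2) • deriv u t = -gradient f (u t)) ↔
    (∀ t ∈ I, deriv (f ∘ u) t ≤
      -(1 / p) * ‖deriv u t‖ ^ p - (1 / q) * ‖gradient f (u t)‖ ^ q) := by
  have hcj : Real.HolderConjugate p q := Real.holderConjugate_iff.mpr ⟨hp, by rwa [← one_div, ← one_div]⟩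
  -- chain rule : deriv (f ∘ u) t = ⟪∇f (u t), u' t⟫
  have hd : ∀ t : ℝ, deriv (f ∘ u) t = inner ℝ (gradient f (u t)) (deriv u t) := by
    intro t
    have hut : HasDerivAt u (deriv u t) t :=
      (hu.differentiable (by simp) t).hasDerivAt
    have hft : HasGradientAt f (gradient f (u t)) (u t) :=
      (hf.differentiable (by simp) (u t)).hasGradientAt
    have hft' := hasGradientAt_iff_hasFDerivAt.1 hft
    have := hft'.comp_hasDerivAt t hut
    simpa [InnerProductSpace.toDual_apply_apply] using this.deriv
  -- key pointwise equivalence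
  have key : ∀ t : ℝ,
      (‖deriv u t‖ ^ (p - 2) • deriv u t = -gradient f (u t)) ↔
      (deriv (f ∘ u) t ≤
        -(1 / p) * ‖deriv u t‖ ^ p - (1 / q) * ‖gradient f (u t)‖ ^ q) := by
    intro t
    set v := deriv u t with hv
    set g := gradient f (u t) with hg
    set a := ‖v‖ with hadef
    set b := ‖g‖ with hbdef
    have ha : 0 ≤ a := norm_nonneg v
    have hb : 0 ≤ b := norm_nonneg g
    rw [hd t, ← hv, ← hg]
    constructor
    · -- forward
      intro h
      rcases eq_or_lt_of_le ha with ha0 | ha0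
      · -- v = 0
        have hv0 : v = 0 := norm_eq_zero.1 ha0.symm
        have hg0 : g = 0 := by
          have := h
          rw [hv0, smul_zero] at this
          simpa using this.symm
        have hb0 : b = 0 := by rw [hbdef, hg0, norm_zero]
        have hiv : (inner ℝ g v : ℝ) = 0 := by rw [hv0, inner_zero_right]
        rw [hiv, ← ha0, hb0, Real.zero_rpow hcj.ne_zero, Real.zero_rpow hcj.symm.ne_zero]
        norm_num
      · -- v ≠ 0
        have hinner : (inner ℝ g v : ℝ) = -(a ^ p) := by
          have : (inner ℝ (-g) v : ℝ) = a ^ (p - 2) * (inner ℝ v v : ℝ) := by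
            rw [← h, real_inner_smul_left]
          rw [inner_neg_left, real_inner_self_eq_norm_sq, ← hadef] at this
          have h2 : a ^ (p - 2) * a ^ (2:ℕ) = a ^ p := by
            calc a ^ (p - 2) * a ^ (2:ℕ) = a ^ (p - 2) * a ^ ((2:ℕ):ℝ) := by
                  rw [Real.rpow_natCast]
              _ = a ^ p := by rw [← Real.rpow_add ha0]; congr 1; ring
          have := this
          rw [h2] at this
          linarith
        have hbval : b = a ^ (p - 1) := by
          calc b = a ^ (p - 2) * a := by
                rw [hbdef, ← neg_neg g, ← h, norm_neg, norm_smul, Real.norm_eq_abs,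
                  abs_of_nonneg (Real.rpow_nonneg ha _), ← hadef]
            _ = a ^ (p - 2) * a ^ (1:ℝ) := by rw [Real.rpow_one]
            _ = a ^ (p - 1) := by rw [← Real.rpow_add ha0]; congr 1; ring
        have hbq : b ^ q = a ^ p := by
          rw [hbval, ← Real.rpow_mul ha, hcj.sub_one_mul_conj]
        rw [hinner, hbq]
        have : -(1 / p) * a ^ p - 1 / q * a ^ p = -((1/p + 1/q) * a ^ p) := by ring
        rw [this, hpq, one_mul]
    · -- backward
      intro h
      -- Cauchy-Schwarz
      have hcs : -(inner ℝ g v : ℝ) ≤ a * b := by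
        have := abs_real_inner_le_norm g v
        rw [← hbdef, ← hadef] at this
        have := neg_le_of_abs_le this
        linarith [this]
      have hyoung : a * b ≤ a ^ p / p + b ^ q / q :=
        Real.young_inequality_of_nonneg ha hb hcj
      have hineq : a ^ p / p + b ^ q / q ≤ -(inner ℝ g v : ℝ) := by
        have hrw : -(1 / p) * a ^ p - 1 / q * b ^ q = -(a ^ p / p + b ^ q / q) := by ring
        rw [hrw] at h
        linarith
      have heq1 : a * b = a ^ p / p + b ^ q / q := le_antisymm hyoung (by linarith)
      have heq2 : -(inner ℝ g v : ℝ) = a * b := by linarith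
      have hbq : b ^ q = a ^ p := young_eq_aux ha hb hcj heq1
      rcases eq_or_lt_of_le ha with ha0 | ha0
      · -- a = 0 : v = 0, and b = 0 so g = 0
        have hv0 : v = 0 := norm_eq_zero.1 ha0.symm
        have hb0 : b = 0 := by
          have : b ^ q = 0 := by
            rw [hbq, ← ha0, Real.zero_rpow hcj.ne_zero]
          have hqpos := hcj.symm.pos
          by_contra hbne
          have hbpos : 0 < b := lt_of_le_of_ne hb (Ne.symm hbne)
          exact absurd this (ne_of_gt (Real.rpow_pos_of_pos hbpos q))
        have hg0 : g = 0 := norm_eq_zero.1 hb0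
        rw [hv0, hg0, smul_zero, neg_zero]
      · -- a > 0
        have hbval : b = a ^ (p - 1) := by
          have h1 : (b ^ q) ^ (1/q) = (a ^ p) ^ (1/q) := by rw [hbq]
          rw [← Real.rpow_mul hb, ← Real.rpow_mul ha, mul_one_div,
            div_self hcj.symm.ne_zero, Real.rpow_one] at h1
          rw [h1, mul_one_div, hcj.div_conj_eq_sub_one]
        -- equality in Cauchy-Schwarz : ⟪-g, v⟫ = ‖-g‖ ‖v‖
        have hcseq : (inner ℝ (-g) v : ℝ) = ‖(-g)‖ * ‖v‖ := by
          rw [inner_neg_left, norm_neg, ← hbdef, ← hadef, heq2]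
          ring
        have := inner_eq_norm_mul_iff_real.1 hcseq
        rw [norm_neg, ← hbdef, ← hadef, hbval] at this
        -- this : a • (-g) = a ^ (p-1) • v
        have hfin : -g = a ^ (p - 2) • v := by
          have h2 : a⁻¹ • (a • (-g)) = a⁻¹ • (a ^ (p - 1) • v) := by rw [this]
          rw [smul_smul, smul_smul, inv_mul_cancel₀ (ne_of_gt ha0), one_smul] at h2
          rw [h2]
          congr 1
          rw [← Real.rpow_neg_one a, ← Real.rpow_add ha0]
          ring_nf
        rw [hfin]
  constructor
  · intro h t ht
    exact (key t).1 (h t ht)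
  · intro h t ht
    exact (key t).2 (h t ht)
end

section
/- Let (S,d) be a complete metric space and f : S → (-∞,+∞] proper, lower semicontinuous and (p,λ)-convex with λ > 0 and p ∈ (1,∞), q its conjugate exponent. Then f(v) - inf_S f ≤ (1/(q λ^{q/p})) |∂⁻f|^q(v) for every v ∈ D(f). Moreover, if D(|∂⁻f|) ≠ ∅, then f admits a unique minimizer ū and λ d^p(v, ū) ≤ f(v) - f(ū) for every v ∈ D(f). -/
open Filter MeasureTheory Set Topology ENNReal NNReal

noncomputable section

variable {S : Type*} [MetricSpace S]

/-- The metric derivative of a curve `u` at time `t` is `m`. -/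
def HasMetricDerivAt (u : ℝ → S) (t m : ℝ) : Prop :=
  Tendsto (fun s => dist (u s) (u t) / |s - t|) (𝓝[≠] t) (𝓝 m)

/-- `v` is an absolutely continuous curve on `I` with (a.e.) metric derivative `dv`,
integrable on `I`, controlling distances. -/
def IsACCurveOn (v : ℝ → S) (I : Set ℝ) (dv : ℝ → ℝ) : Prop :=
  (∀ t ∈ I, 0 ≤ dv t) ∧ IntegrableOn dv I ∧
  (∀ s ∈ I, ∀ t ∈ I, s ≤ t → dist (v s) (v t) ≤ ∫ r in s..t, dv r) ∧
  (∀ᵐ t ∂(volume.restrict I), HasMetricDerivAt v t (dv t))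

/-- The local (descending) slope `|∂⁻ f|`, valued in `ℝ≥0∞`. -/
def slope' (f : S → EReal) (v : S) : ℝ≥0∞ :=
  if f v = ⊤ then ⊤
  else Filter.limsup (fun w => ENNReal.ofReal ((f v - f w).toReal) / edist v w) (𝓝[≠] v)

/-- `g` is a strong upper gradient for `f`. -/
def StrongUpperGradient (f : S → EReal) (g : S → ℝ≥0∞) : Prop :=
  ∀ (I : Set ℝ) (v : ℝ → S) (dv : ℝ → ℝ), IsACCurveOn v I dv →
    (∀ t ∈ I, f (v t) ≠ ⊤) →
    AEMeasurable (fun t => g (v t)) (volume.restrict I) ∧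
    ∀ s ∈ I, ∀ t ∈ I, s ≤ t →
      ENNReal.ofReal |(f (v t)).toReal - (f (v s)).toReal| ≤
        ∫⁻ r in Set.Ioc s t, g (v r) * ENNReal.ofReal (dv r)

/-- The interval `[0, a)` (with `a ∈ (0, ∞]`) as a subset of `ℝ`. -/
def Icoe (a : ℝ≥0∞) : Set ℝ := {t : ℝ | 0 ≤ t ∧ ENNReal.ofReal t < a}

/-- `u` is a `p`-curve of maximal slope for `f` on `[0,a)` starting from `u₀`,
with metric derivative `du` and non-increasing a.e. representative `φ` of `f ∘ u`. -/
structure IsCMS (f : S → EReal) (p q : ℝ) (a : ℝ≥0∞) (u₀ : S)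
    (u : ℝ → S) (du : ℝ → ℝ) (φ : ℝ → ℝ) : Prop where
  init : u 0 = u₀
  dom : f u₀ ≠ ⊤
  ac : ∀ T : ℝ, Set.Icc 0 T ⊆ Icoe a → IsACCurveOn u (Set.Icc 0 T) du
  anti : AntitoneOn φ (Icoe a)
  eq_ae : ∀ᵐ t ∂(volume.restrict (Icoe a)), (φ t : EReal) = f (u t)
  ineq : ∀ᵐ t ∂(volume.restrict (Icoe a)), ∃ φ' : ℝ,
    HasDerivWithinAt φ φ' (Icoe a) t ∧
    (φ' : EReal) ≤ -(((1/p) * du t ^ p : ℝ) : EReal)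
      - (((1/q : ℝ)) : EReal) * ((slope' f (u t) ^ q : ℝ≥0∞) : EReal)

/-- `f` is `(p, λ)`-convex. -/
def PLConvex (f : S → EReal) (p lam : ℝ) : Prop :=
  ∃ ψ : ℝ → ℝ, (∀ t ∈ Set.Icc (0:ℝ) 1, ψ t ∈ Set.Icc (0:ℝ) 1) ∧
    Tendsto ψ (𝓝[>] (0:ℝ)) (𝓝 0) ∧ (∃ t ∈ Set.Ioo (0:ℝ) 1, ψ t < 1) ∧
    ∀ v₀ v₁ : S, ∃ γ : ℝ → S, ContinuousOn γ (Set.Icc 0 1) ∧ γ 0 = v₀ ∧ γ 1 = v₁ ∧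
      (∀ t ∈ Set.Icc (0:ℝ) 1, dist (γ t) (γ 0) ≤ t * dist (γ 1) (γ 0)) ∧
      (∀ t ∈ Set.Icc (0:ℝ) 1,
        f (γ t) ≤ ((1 - t : ℝ) : EReal) * f (γ 0) + ((t : ℝ) : EReal) * f (γ 1)
          - ((lam * t * (1 - ψ t) * dist (γ 0) (γ 1) ^ p : ℝ) : EReal))

/-- The supremum of times at which the slope along `u` is positive. -/
def tstar (f : S → EReal) (u : ℝ → S) (a : ℝ≥0∞) : ℝ≥0∞ :=
  ⨆ t ∈ {t | t ∈ Icoe a ∧ 0 < slope' f (u t)}, ENNReal.ofReal t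

/-! Along a `(p, λ)`-convex curve `γ` from `v` to `w`, with `d = d(v, w)`, the difference quotient
of `f` at `v` in the direction of `γ t` is at least `(f v - f w) / d + λ (1 - ψ t) d ^ (p - 1)`.
Letting `t → 0` gives `|∂⁻f|(v) ≥ (f v - f w) / d + λ d ^ (p - 1)`, i.e.
`f v - f w ≤ |∂⁻f|(v) d - λ d ^ p`, and Young's inequality bounds the right-hand side by
`|∂⁻f|(v) ^ q / (q λ ^ (q / p))`.

If the slope is finite at one point, `f` is thus bounded below, and convexity at a fixed `t` with
`ψ t < 1` makes the sublevel sets `{f < inf f + δ}` of diameter `O(δ ^ (1 / p))`, so minimizing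
sequences are Cauchy and lower semicontinuity yields a minimizer `ū`. The slope vanishes at `ū`, and
the inequality above at `ū` reads `λ d ^ p (v, ū) ≤ f v - f ū`, which also gives uniqueness. -/

theorem mul_sub_mul_rpow_le_of_holderConjugate {p q lam G d : ℝ} (hpq : p.HolderConjugate q)
    (hlam : 0 < lam) (hG : 0 ≤ G) (hd : 0 ≤ d) :
    G * d - lam * d ^ p ≤ 1 / (q * lam ^ (q / p)) * G ^ q := by
  have hl : 0 < lam ^ (1 / p) := Real.rpow_pos_of_pos hlam _
  have young := Real.young_inequality_of_nonneg (mul_nonneg hl.le hd) (div_nonneg hG hl.le) hpq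
  have h1 : lam ^ (1 / p) * d * (G / lam ^ (1 / p)) = G * d := by field_simp
  have h2 : (lam ^ (1 / p) * d) ^ p = lam * d ^ p := by
    rw [Real.mul_rpow hl.le hd, ← Real.rpow_mul hlam.le, one_div_mul_cancel hpq.pos.ne',
      Real.rpow_one]
  have h3 : (G / lam ^ (1 / p)) ^ q / q = 1 / (q * lam ^ (q / p)) * G ^ q := by
    rw [Real.div_rpow hG hl.le, ← Real.rpow_mul hlam.le, one_div_mul_eq_div]
    field_simp
  have h4 : lam * d ^ p / p ≤ lam * d ^ p := div_le_self (by positivity) hpq.lt.le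
  rw [h1, h2, h3] at young
  linarith

theorem ofReal_div_le_of_mul_le_of_dist_le {x y : S} {t d c Y : ℝ} (ht : 0 < t) (hd : 0 < d)
    (hc : t * Y ≤ c) (hxy : dist y x ≤ t * d) :
    ENNReal.ofReal (Y / d) ≤ ENNReal.ofReal c / edist x y := by
  rw [edist_comm, edist_dist, ← mul_div_mul_left Y d ht.ne',
    ENNReal.ofReal_div_of_pos (mul_pos ht hd)]
  exact ENNReal.div_le_div (ENNReal.ofReal_le_ofReal hc) (ENNReal.ofReal_le_ofReal hxy)

theorem slope'_eq_zero_of_forall_le {f : S → EReal} {u : S} (hu : f u ≠ ⊤)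
    (hmin : ∀ w, f u ≤ f w) : slope' f u = 0 := by
  rw [slope', if_neg hu]
  refine le_antisymm (limsup_le_of_le (by isBoundedDefault) (Eventually.of_forall fun w => ?_))
    bot_le
  rw [ENNReal.ofReal_of_nonpos (EReal.toReal_nonpos (EReal.sub_nonpos.mpr (hmin w))),
    ENNReal.zero_div]

/-- Tikhonov well-posedness of `f` at the level `m`, in its sublevel-diameter form. -/
def IsWellPosedAt (f : S → EReal) (m : ℝ) : Prop :=
  ∀ ε > 0, ∃ δ > 0, ∀ w w', f w < ((m + δ : ℝ) : EReal) → f w' < ((m + δ : ℝ) : EReal) →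
    dist w w' < ε

section PLConvex

variable {f : S → EReal} {p lam : ℝ}

theorem PLConvex.exists_curve_toReal (hconv : PLConvex f p lam) (hbot : ∀ v, f v ≠ ⊥) :
    ∃ ψ : ℝ → ℝ, Tendsto ψ (𝓝[>] 0) (𝓝 0) ∧ (∃ t ∈ Ioo (0 : ℝ) 1, ψ t < 1) ∧
      ∀ v w, f v ≠ ⊤ → f w ≠ ⊤ → ∃ γ : ℝ → S, ∀ t ∈ Icc (0 : ℝ) 1,
        dist (γ t) v ≤ t * dist v w ∧ f (γ t) ≠ ⊤ ∧
        (f (γ t)).toReal ≤ (1 - t) * (f v).toReal + t * (f w).toReal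
          - lam * t * (1 - ψ t) * dist v w ^ p := by
  obtain ⟨ψ, -, hψ0, hψ1, hcurve⟩ := hconv
  refine ⟨ψ, hψ0, hψ1, fun v w hv hw => ?_⟩
  obtain ⟨γ, -, rfl, rfl, hdist, hf⟩ := hcurve v w
  refine ⟨γ, fun t ht => ⟨by simpa [dist_comm (γ 1)] using hdist t ht, ?_⟩⟩
  have h := hf t ht
  rw [← EReal.coe_toReal hv (hbot _), ← EReal.coe_toReal hw (hbot _)] at h
  norm_cast at h
  have hfin : f (γ t) ≠ ⊤ := ne_top_of_le_ne_top (EReal.coe_ne_top _) h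
  refine ⟨hfin, ?_⟩
  rwa [← EReal.coe_le_coe_iff, EReal.coe_toReal hfin (hbot _)]

theorem PLConvex.ofReal_le_slope' (hconv : PLConvex f p lam) (hbot : ∀ v, f v ≠ ⊥) {v w : S}
    (hv : f v ≠ ⊤) (hw : f w ≠ ⊤) (hvw : v ≠ w) :
    ENNReal.ofReal (((f v).toReal - (f w).toReal + lam * dist v w ^ p) / dist v w)
      ≤ slope' f v := by
  obtain ⟨ψ, hψ0, -, hcurve⟩ := hconv.exists_curve_toReal hbot
  obtain ⟨γ, hγ⟩ := hcurve v w hv hw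
  set d := dist v w
  have hd : 0 < d := dist_pos.mpr hvw
  rcases le_or_gt ((f v).toReal - (f w).toReal + lam * d ^ p) 0 with hX | hX
  · rw [ENNReal.ofReal_of_nonpos (div_nonpos_of_nonpos_of_nonneg hX hd.le)]
    exact bot_le
  set Y : ℝ → ℝ := fun t => (f v).toReal - (f w).toReal + lam * (1 - ψ t) * d ^ p
  have hY : Tendsto Y (𝓝[>] 0) (𝓝 ((f v).toReal - (f w).toReal + lam * d ^ p)) := by
    simpa using ((((tendsto_const_nhds (x := (1 : ℝ))).sub hψ0).const_mul lam).mul_const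
      (d ^ p)).const_add ((f v).toReal - (f w).toReal)
  have hdist : ∀ t ∈ Ioo (0 : ℝ) 1, dist (γ t) v ≤ t * d := fun t ht =>
    (hγ t (Ioo_subset_Icc_self ht)).1
  have hdecr : ∀ t ∈ Ioo (0 : ℝ) 1, 0 < Y t → γ t ≠ v ∧
      ENNReal.ofReal (Y t / d) ≤ ENNReal.ofReal ((f v - f (γ t)).toReal) / edist v (γ t) := by
    intro t ht hYt
    obtain ⟨-, hfin, hle⟩ := hγ t (Ioo_subset_Icc_self ht)
    have hgain : t * Y t ≤ (f v).toReal - (f (γ t)).toReal := by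
      simp only [Y]
      linarith
    refine ⟨fun h => ?_, ofReal_div_le_of_mul_le_of_dist_le ht.1 hd
      (hgain.trans_eq (EReal.toReal_sub hv (hbot v) hfin (hbot _)).symm) (hdist t ht)⟩
    rw [h, sub_self] at hgain
    linarith [mul_pos ht.1 hYt]
  have hev : ∀ᶠ t in 𝓝[>] (0 : ℝ), t ∈ Ioo (0 : ℝ) 1 ∧ 0 < Y t :=
    Eventually.and (Ioo_mem_nhdsGT one_pos) (hY.eventually_const_lt hX)
  have hγv : Tendsto γ (𝓝[>] 0) (𝓝[≠] v) := by
    refine tendsto_nhdsWithin_iff.mpr ⟨?_, hev.mono fun t ht => (hdecr t ht.1 ht.2).1⟩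
    refine tendsto_iff_dist_tendsto_zero.mpr (squeeze_zero'
      (Eventually.of_forall fun _ => dist_nonneg) (hev.mono fun t ht => hdist t ht.1) ?_)
    simpa using ((continuous_id.mul_const d).tendsto 0).mono_left nhdsWithin_le_nhds
  calc ENNReal.ofReal (((f v).toReal - (f w).toReal + lam * d ^ p) / d)
      = limsup (fun t => ENNReal.ofReal (Y t / d)) (𝓝[>] 0) :=
        ((ENNReal.continuous_ofReal.tendsto _).comp (hY.div_const d)).limsup_eq.symm
    _ ≤ limsup (fun t => ENNReal.ofReal ((f v - f (γ t)).toReal) / edist v (γ t)) (𝓝[>] 0) :=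
        limsup_le_limsup (hev.mono fun t ht => (hdecr t ht.1 ht.2).2)
    _ ≤ limsup (fun u => ENNReal.ofReal ((f v - f u).toReal) / edist v u) (𝓝[≠] v) :=
        (limsup_comp (fun u => ENNReal.ofReal ((f v - f u).toReal) / edist v u) γ _).trans_le
          (limsup_le_limsup_of_le hγv)
    _ = slope' f v := by rw [slope', if_neg hv]

theorem PLConvex.toReal_sub_toReal_le (hconv : PLConvex f p lam) (hbot : ∀ v, f v ≠ ⊥)
    (hp : 0 < p) {v w : S} (hv : f v ≠ ⊤) (hsl : slope' f v ≠ ⊤) (hw : f w ≠ ⊤) :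
    (f v).toReal - (f w).toReal ≤ (slope' f v).toReal * dist v w - lam * dist v w ^ p := by
  rcases eq_or_ne v w with rfl | hvw
  · simp [Real.zero_rpow hp.ne']
  have h := (ENNReal.ofReal_le_iff_le_toReal hsl).mp (hconv.ofReal_le_slope' hbot hv hw hvw)
  rw [div_le_iff₀ (dist_pos.mpr hvw)] at h
  linarith

theorem PLConvex.coe_toReal_sub_le_iInf {q : ℝ} (hconv : PLConvex f p lam)
    (hbot : ∀ v, f v ≠ ⊥) (hpq : p.HolderConjugate q) (hlam : 0 < lam) {v : S} (hv : f v ≠ ⊤)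
    (hsl : slope' f v ≠ ⊤) :
    (((f v).toReal - 1 / (q * lam ^ (q / p)) * (slope' f v).toReal ^ q : ℝ) : EReal)
      ≤ ⨅ w, f w := le_iInf fun w => by
  by_cases hw : f w = ⊤
  · simp [hw]
  rw [← EReal.coe_toReal hw (hbot w), EReal.coe_le_coe_iff]
  linarith [hconv.toReal_sub_toReal_le hbot hpq.pos hv hsl hw,
    mul_sub_mul_rpow_le_of_holderConjugate hpq hlam (ENNReal.toReal_nonneg (a := slope' f v))
      (dist_nonneg (x := v) (y := w))]

theorem PLConvex.sub_iInf_le {q : ℝ} (hconv : PLConvex f p lam) (hbot : ∀ v, f v ≠ ⊥)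
    (hpq : p.HolderConjugate q) (hlam : 0 < lam) {v : S} (hv : f v ≠ ⊤) :
    f v - ⨅ w, f w ≤
      (((1 / (q * lam ^ (q / p))) : ℝ) : EReal) * ((slope' f v ^ q : ℝ≥0∞) : EReal) := by
  set C := 1 / (q * lam ^ (q / p))
  have hq := hpq.symm.pos
  have hC : 0 < C := by positivity
  by_cases hsl : slope' f v = ⊤
  · rw [hsl, ENNReal.top_rpow_of_pos hq, EReal.coe_ennreal_top,
      EReal.mul_top_of_pos (EReal.coe_pos.mpr hC)]
    exact le_top
  calc f v - ⨅ w, f w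
      ≤ ((f v).toReal : EReal) - (((f v).toReal - C * (slope' f v).toReal ^ q : ℝ) : EReal) :=
        EReal.sub_le_sub (EReal.coe_toReal hv (hbot v)).ge
          (hconv.coe_toReal_sub_le_iInf hbot hpq hlam hv hsl)
    _ = (C : EReal) * ((slope' f v ^ q : ℝ≥0∞) : EReal) := by
        rw [← EReal.coe_sub, _root_.sub_sub_cancel, ← ENNReal.ofReal_toReal hsl,
          ENNReal.ofReal_rpow_of_nonneg ENNReal.toReal_nonneg hq.le, EReal.coe_ennreal_ofReal,
          max_eq_left (by positivity), ENNReal.toReal_ofReal ENNReal.toReal_nonneg, EReal.coe_mul]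

theorem PLConvex.mul_dist_rpow_le_of_forall_le (hconv : PLConvex f p lam)
    (hbot : ∀ v, f v ≠ ⊥) (hp : 0 < p) {u : S} (hu : f u ≠ ⊤) (hmin : ∀ w, f u ≤ f w) {v : S}
    (hv : f v ≠ ⊤) : lam * dist v u ^ p ≤ (f v).toReal - (f u).toReal := by
  have hsl := slope'_eq_zero_of_forall_le hu hmin
  have h := hconv.toReal_sub_toReal_le hbot hp hu (by simp [hsl]) hv
  rw [hsl, ENNReal.toReal_zero, zero_mul, dist_comm] at h
  linarith

theorem PLConvex.isWellPosedAt (hconv : PLConvex f p lam) (hbot : ∀ v, f v ≠ ⊥) (hp : 0 < p)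
    (hlam : 0 < lam) {m : ℝ} (hm : ∀ x, (m : EReal) ≤ f x) : IsWellPosedAt f m := by
  obtain ⟨ψ, -, ⟨t, ht, hψt⟩, hcurve⟩ := hconv.exists_curve_toReal hbot
  have hc : 0 < lam * t * (1 - ψ t) := mul_pos (mul_pos hlam ht.1) (sub_pos.mpr hψt)
  intro ε hε
  refine ⟨lam * t * (1 - ψ t) * ε ^ p, by positivity, fun w w' hw hw' => ?_⟩
  have hwt := ne_top_of_lt hw
  have hwt' := ne_top_of_lt hw'
  rw [← EReal.coe_toReal hwt (hbot w), EReal.coe_lt_coe_iff] at hw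
  rw [← EReal.coe_toReal hwt' (hbot w'), EReal.coe_lt_coe_iff] at hw'
  obtain ⟨γ, hγ⟩ := hcurve w w' hwt hwt'
  obtain ⟨-, hfin, hle⟩ := hγ t (Ioo_subset_Icc_self ht)
  have hmγ : m ≤ (f (γ t)).toReal := by
    rw [← EReal.coe_le_coe_iff, EReal.coe_toReal hfin (hbot _)]
    exact hm _
  have hlt : lam * t * (1 - ψ t) * dist w w' ^ p < lam * t * (1 - ψ t) * ε ^ p := by
    nlinarith [ht.1, ht.2]
  exact (Real.rpow_lt_rpow_iff dist_nonneg hε.le hp).mp (lt_of_mul_lt_mul_left hlt hc.le)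

end PLConvex

theorem exists_forall_le_of_isWellPosedAt [CompleteSpace S] {f : S → EReal}
    (hf : LowerSemicontinuous f) {m : ℝ} (hm : ⨅ x, f x = m) (h : IsWellPosedAt f m) :
    ∃ u, ∀ w, f u ≤ f w := by
  have hseq : ∀ n : ℕ, ∃ x, f x < ((m + 1 / (n + 1) : ℝ) : EReal) := fun n => by
    rw [← iInf_lt_iff, hm, EReal.coe_lt_coe_iff]
    exact lt_add_of_pos_right m Nat.one_div_pos_of_nat
  choose x hx using hseq
  have hsmall : ∀ δ > 0, ∀ᶠ n in atTop, f (x n) < ((m + δ : ℝ) : EReal) := fun δ hδ => by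
    filter_upwards [tendsto_one_div_add_atTop_nhds_zero_nat.eventually_lt_const hδ] with n hn
    exact (hx n).trans (EReal.coe_lt_coe_iff.mpr (by linarith))
  have hcauchy : CauchySeq x := Metric.cauchySeq_iff.mpr fun ε hε => by
    obtain ⟨δ, hδ, hδε⟩ := h ε hε
    obtain ⟨N, hN⟩ := eventually_atTop.mp (hsmall δ hδ)
    exact ⟨N, fun n hn k hk => hδε _ _ (hN n hn) (hN k hk)⟩
  obtain ⟨u, hu⟩ := cauchySeq_tendsto_of_complete hcauchy
  refine ⟨u, fun w => le_trans ?_ (hm ▸ iInf_le f w)⟩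
  by_contra! hlt
  obtain ⟨y, hmy, hyu⟩ := EReal.exists_between_coe_real hlt
  obtain ⟨n, hyn, hny⟩ := ((hu.eventually (hf u y hyu)).and
    (hsmall (y - m) (sub_pos.mpr (EReal.coe_lt_coe_iff.mp hmy)))).exists
  rw [add_sub_cancel] at hny
  exact lt_asymm hyn hny

theorem stmt6_general [CompleteSpace S] (f : S → EReal)
    (hbot : ∀ v, f v ≠ ⊥) (hlsc : LowerSemicontinuous f)
    (p q lam : ℝ) (hp : 1 < p) (hpq : 1 / p + 1 / q = 1) (hlam : 0 < lam)
    (hconv : PLConvex f p lam) :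
    (∀ v : S, f v ≠ ⊤ →
      f v - ⨅ w, f w ≤
        (((1 / (q * lam ^ (q / p))) : ℝ) : EReal) * ((slope' f v ^ q : ℝ≥0∞) : EReal)) ∧
    ((∃ v₀ : S, slope' f v₀ ≠ ⊤) →
      ∃ ub : S, (∀ w, f ub ≤ f w) ∧ (∀ w, (∀ w', f w ≤ f w') → w = ub) ∧
        ∀ v : S, f v ≠ ⊤ → ((lam * dist v ub ^ p : ℝ) : EReal) ≤ f v - f ub) := by
  have hpq' : p.HolderConjugate q :=
    Real.holderConjugate_iff.mpr ⟨hp, by simpa only [one_div] using hpq⟩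
  refine ⟨fun v hv => hconv.sub_iInf_le hbot hpq' hlam hv, ?_⟩
  rintro ⟨v₀, hsl₀⟩
  have hv₀ : f v₀ ≠ ⊤ := fun h => hsl₀ (by rw [slope', if_pos h])
  have hm : ⨅ w, f w = ((⨅ w, f w).toReal : EReal) :=
    (EReal.coe_toReal (ne_top_of_le_ne_top hv₀ (iInf_le f v₀)) (ne_bot_of_le_ne_bot
      (EReal.coe_ne_bot _) (hconv.coe_toReal_sub_le_iInf hbot hpq' hlam hv₀ hsl₀))).symm
  obtain ⟨ub, hub⟩ := exists_forall_le_of_isWellPosedAt hlsc hm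
    (hconv.isWellPosedAt hbot hpq'.pos hlam fun x => hm ▸ iInf_le f x)
  have hubt : f ub ≠ ⊤ := ne_top_of_le_ne_top hv₀ (hub v₀)
  have hgrowth := fun v (hv : f v ≠ ⊤) =>
    hconv.mul_dist_rpow_le_of_forall_le hbot hpq'.pos hubt hub hv
  refine ⟨ub, hub, fun w hw => ?_, fun v hv => ?_⟩
  · have h := hgrowth w (ne_top_of_le_ne_top hubt (hw ub))
    rw [le_antisymm (hw ub) (hub w), sub_self] at h
    by_contra hne
    nlinarith [Real.rpow_pos_of_pos (dist_pos.mpr hne) p]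
  · rw [← EReal.coe_toReal hv (hbot v), ← EReal.coe_toReal hubt (hbot ub), ← EReal.coe_sub,
      EReal.coe_le_coe_iff]
    exact hgrowth v hv

theorem stmt6 [CompleteSpace S] (f : S → EReal) (hproper : ∃ v, f v ≠ ⊤)
    (hbot : ∀ v, f v ≠ ⊥) (hlsc : LowerSemicontinuous f)
    (p q lam : ℝ) (hp : 1 < p) (hpq : 1 / p + 1 / q = 1) (hlam : 0 < lam)
    (hconv : PLConvex f p lam) :
    (∀ v : S, f v ≠ ⊤ →
      f v - ⨅ w, f w ≤
        (((1 / (q * lam ^ (q / p))) : ℝ) : EReal) * ((slope' f v ^ q : ℝ≥0∞) : EReal)) ∧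
    ((∃ v₀ : S, slope' f v₀ ≠ ⊤) →
      ∃ ub : S, (∀ w, f ub ≤ f w) ∧ (∀ w, (∀ w', f w ≤ f w') → w = ub) ∧
        ∀ v : S, f v ≠ ⊤ → ((lam * dist v ub ^ p : ℝ) : EReal) ≤ f v - f ub) :=
  stmt6_general f hbot hlsc p q lam hp hpq hlam hconv
end
end

section
/- On ℝ² with f(x) = -(x₁² + x₂²)/2 and u₀ = (0,0): f is (2,-2)-convex, |∂⁻f|(u₀) = 0, and for every p' ∈ (2,∞), setting α := 1 - q'/p' ∈ (0,1) (q' the conjugate of p'), the curve u_θ(t) := ((αt)^{1/α} cos θ, (αt)^{1/α} sin θ) is a p'-curve of maximal slope for f starting from u₀ on [0,∞), for every θ ∈ [0, 2π). In particular p'-curves of maximal slope starting from u₀ are not unique for p' > 2, while the constant curve is a p'-curve of maximal slope for every p' ∈ (1, 2]. -/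
open Filter MeasureTheory Set Topology ENNReal NNReal

noncomputable section

variable {S : Type*} [MetricSpace S]

/-! For `f = -‖·‖² / 2` the descending slope is `|∂⁻f|(v) = ‖v‖`. Along a radial curve
`u = r • e` with `‖e‖ = 1` one has `|u'| = r'` and `(f ∘ u)' = -r r'`. If `r' = r ^ (q - 1)`,
then `(q - 1) p = q` gives `|u'| ^ p = |∂⁻f|(u) ^ q = r ^ q = r r'`, so `1/p + 1/q = 1` turns the
maximal-slope inequality into an equality. The Cauchy problem `r' = r ^ (q - 1)`, `r 0 = 0`
always has the solution `r = 0`; when `p > 2`, i.e. `q < 2`, it also has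
`r t = (α t) ^ (1 / α)` with `α = 2 - q = 1 - q / p`. -/

lemma Icoe_top : Icoe ⊤ = Ici (0 : ℝ) := by
  ext t; simp [Icoe]

lemma Real.HolderConjugate.one_sub_div_eq {p q : ℝ} (hpq : p.HolderConjugate q) :
    1 - q / p = 2 - q := by
  rw [hpq.symm.div_conj_eq_sub_one]; ring

lemma Real.HolderConjugate.one_sub_div_mem_Ioo {p q : ℝ} (hpq : p.HolderConjugate q)
    (hp : 2 < p) : 1 - q / p ∈ Ioo 0 1 := by
  rw [hpq.one_sub_div_eq]
  constructor <;> nlinarith [hpq.symm.sub_one_mul_conj, hpq.symm.lt]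

lemma hasDerivAt_mul_rpow_inv {α t : ℝ} (hα : 0 < α) (ht : 0 < t) :
    HasDerivAt (fun s => (α * s) ^ (1 / α)) (((α * t) ^ (1 / α)) ^ (1 - α)) t := by
  refine (((hasDerivAt_id t).const_mul α).rpow_const (p := 1 / α)
    (Or.inl (mul_pos hα ht).ne')).congr_deriv ?_
  rw [← Real.rpow_mul (mul_pos hα ht).le]
  field_simp
  rfl

section NormedSpace

variable {E : Type*} [NormedAddCommGroup E]

def negHalfSqNorm (v : E) : EReal := ((-(1 / 2) * ‖v‖ ^ 2 : ℝ) : EReal)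

lemma toReal_negHalfSqNorm_sub (v w : E) :
    (negHalfSqNorm v - negHalfSqNorm w).toReal = (‖w‖ ^ 2 - ‖v‖ ^ 2) / 2 := by
  rw [negHalfSqNorm, negHalfSqNorm, ← EReal.coe_sub, EReal.toReal_coe]
  ring

lemma limsup_negHalfSqNorm_quotient_le (v : E) :
    limsup (fun w => ENNReal.ofReal ((negHalfSqNorm v - negHalfSqNorm w).toReal) / edist v w)
      (𝓝[≠] v) ≤ ENNReal.ofReal ‖v‖ := by
  obtain h | _ := (𝓝[≠] v).eq_or_neBot
  · simp [h]
  have hmean : Tendsto (fun w : E => ENNReal.ofReal ((‖v‖ + ‖w‖) / 2)) (𝓝[≠] v)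
      (𝓝 (ENNReal.ofReal ‖v‖)) := by
    have : Continuous fun w : E => ENNReal.ofReal ((‖v‖ + ‖w‖) / 2) :=
      ENNReal.continuous_ofReal.comp (by fun_prop)
    simpa [add_self_div_two] using (this.tendsto v).mono_left nhdsWithin_le_nhds
  refine (limsup_le_limsup ?_).trans hmean.limsup_eq.le
  filter_upwards [self_mem_nhdsWithin] with w hw
  have hd : 0 < dist v w := dist_pos.2 (Ne.symm hw)
  have hquot : (‖w‖ ^ 2 - ‖v‖ ^ 2) / 2 ≤ dist v w * ((‖v‖ + ‖w‖) / 2) := by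
    have : ‖w‖ - ‖v‖ ≤ dist v w := by
      rw [dist_comm, dist_eq_norm]; exact norm_sub_norm_le w v
    nlinarith [norm_nonneg v, norm_nonneg w]
  rw [toReal_negHalfSqNorm_sub, edist_dist, ENNReal.div_le_iff (ENNReal.ofReal_pos.2 hd).ne'
    ENNReal.ofReal_ne_top, ← ENNReal.ofReal_mul (by positivity), mul_comm]
  exact ENNReal.ofReal_le_ofReal hquot

variable [NormedSpace ℝ E]

lemma le_limsup_negHalfSqNorm_quotient (v : E) :
    ENNReal.ofReal ‖v‖ ≤
      limsup (fun w => ENNReal.ofReal ((negHalfSqNorm v - negHalfSqNorm w).toReal) / edist v w)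
        (𝓝[≠] v) := by
  rcases eq_or_ne v 0 with rfl | hv
  · simp
  have hv' : 0 < ‖v‖ := norm_pos_iff.2 hv
  have hray : Tendsto (fun s : ℝ => (1 + s) • v) (𝓝[>] 0) (𝓝[≠] v) := by
    refine tendsto_nhdsWithin_of_tendsto_nhds_of_eventually_within _ ?_ ?_
    · have : Continuous fun s : ℝ => (1 + s) • v := by fun_prop
      simpa using (this.tendsto 0).mono_left nhdsWithin_le_nhds
    · filter_upwards [self_mem_nhdsWithin] with s (hs : 0 < s)
      simpa [add_smul, hv] using hs.ne'
  refine le_limsup_of_frequently_le (hray.frequently (Eventually.frequently ?_))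
  filter_upwards [self_mem_nhdsWithin] with s (hs : 0 < s)
  have hnorm : ‖(1 + s) • v‖ = (1 + s) * ‖v‖ := by
    rw [norm_smul, Real.norm_of_nonneg (by linarith)]
  have hdist : dist v ((1 + s) • v) = s * ‖v‖ := by
    rw [dist_eq_norm, show v - (1 + s) • v = (-s) • v by module, norm_smul, norm_neg,
      Real.norm_of_nonneg hs.le]
  rw [toReal_negHalfSqNorm_sub, hnorm, edist_dist, hdist, ENNReal.le_div_iff_mul_le
    (Or.inl (ENNReal.ofReal_pos.2 (by positivity)).ne') (Or.inl ENNReal.ofReal_ne_top),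
    ← ENNReal.ofReal_mul hv'.le]
  exact ENNReal.ofReal_le_ofReal (by nlinarith [sq_nonneg (s * ‖v‖)])

lemma slope'_negHalfSqNorm (v : E) : slope' negHalfSqNorm v = ENNReal.ofReal ‖v‖ := by
  rw [slope', if_neg (show ¬negHalfSqNorm v = ⊤ from EReal.coe_ne_top _)]
  exact le_antisymm (limsup_negHalfSqNorm_quotient_le v) (le_limsup_negHalfSqNorm_quotient v)

lemma dist_smul_of_norm_eq_one {e : E} (he : ‖e‖ = 1) (a b : ℝ) :
    dist (a • e) (b • e) = |a - b| := by
  rw [dist_eq_norm, ← sub_smul, norm_smul, he, mul_one, Real.norm_eq_abs]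

lemma hasMetricDerivAt_smul_of_norm_eq_one {e : E} (he : ‖e‖ = 1) {r : ℝ → ℝ} {r' t : ℝ}
    (hr : HasDerivAt r r' t) : HasMetricDerivAt (fun s => r s • e) t |r'| := by
  refine (hasDerivAt_iff_tendsto_slope.1 hr).abs.congr fun s => ?_
  rw [dist_smul_of_norm_eq_one he, slope_def_field, abs_div]

lemma isACCurveOn_Icc_smul_of_norm_eq_one {e : E} (he : ‖e‖ = 1) {r dr : ℝ → ℝ} {a b : ℝ}
    (hr : ContinuousOn r (Icc a b)) (hdr : ContinuousOn dr (Icc a b))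
    (hdr_nonneg : ∀ t ∈ Icc a b, 0 ≤ dr t) (hderiv : ∀ t ∈ Ioo a b, HasDerivAt r (dr t) t) :
    IsACCurveOn (fun t => r t • e) (Icc a b) dr := by
  refine ⟨hdr_nonneg, hdr.integrableOn_Icc, fun s hs t ht hst => ?_, ?_⟩
  · have hsub : Icc s t ⊆ Icc a b := Icc_subset_Icc hs.1 ht.2
    have hftc : ∫ x in s..t, dr x = r t - r s :=
      intervalIntegral.integral_eq_sub_of_hasDerivAt_of_le hst (hr.mono hsub)
        (fun x hx => hderiv x ⟨hs.1.trans_lt hx.1, hx.2.trans_le ht.2⟩)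
        ((hdr.mono hsub).intervalIntegrable_of_Icc hst)
    have hmono : r s ≤ r t := by
      rw [← sub_nonneg, ← hftc]
      exact intervalIntegral.integral_nonneg hst fun x hx => hdr_nonneg x (hsub hx)
    rw [dist_smul_of_norm_eq_one he, hftc, abs_sub_comm, abs_of_nonneg (sub_nonneg.2 hmono)]
  · rw [Measure.restrict_congr_set Ioo_ae_eq_Icc.symm]
    filter_upwards [ae_restrict_mem measurableSet_Ioo] with t ht
    simpa [abs_of_nonneg (hdr_nonneg t (Ioo_subset_Icc_self ht))] using
      hasMetricDerivAt_smul_of_norm_eq_one he (hderiv t ht)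

theorem isCMS_negHalfSqNorm_smul {p q : ℝ} (hpq : p.HolderConjugate q) {e : E} (he : ‖e‖ = 1)
    {r : ℝ → ℝ} (hr : Continuous r) (hr0 : r 0 = 0) (hr_nonneg : ∀ t, 0 ≤ t → 0 ≤ r t)
    (hderiv : ∀ t, 0 < t → HasDerivAt r (r t ^ (q - 1)) t) :
    IsCMS negHalfSqNorm p q ⊤ 0 (fun t => r t • e) (fun t => r t ^ (q - 1))
      (fun t => -(1 / 2) * r t ^ 2) := by
  have hq : 0 < q - 1 := hpq.symm.sub_one_pos
  have hdr : Continuous fun t => r t ^ (q - 1) := hr.rpow_const fun _ => Or.inr hq.le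
  have hpow : ∀ t, 0 ≤ t → r t * r t ^ (q - 1) = r t ^ q := fun t ht => by
    rw [← Real.rpow_one_add' (hr_nonneg t ht) (by linarith), add_sub_cancel]
  have hφ : ∀ t, 0 < t → HasDerivAt (fun t => -(1 / 2) * r t ^ 2) (-r t ^ q) t := fun t ht => by
    refine (((hderiv t ht).pow 2).const_mul (-(1 / 2) : ℝ)).congr_deriv ?_
    rw [← hpow t ht.le]; push_cast; ring
  have hnorm : ∀ t, ‖r t • e‖ = |r t| := fun t => by rw [norm_smul, he, mul_one, Real.norm_eq_abs]
  refine ⟨by simp [hr0], EReal.coe_ne_top _, fun T _ => ?_, ?_, ?_, ?_⟩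
  · exact isACCurveOn_Icc_smul_of_norm_eq_one he hr.continuousOn hdr.continuousOn
      (fun t ht => Real.rpow_nonneg (hr_nonneg t ht.1) _) fun t ht => hderiv t ht.1
  · rw [Icoe_top]
    refine antitoneOn_of_hasDerivWithinAt_nonpos (convex_Ici 0) (by fun_prop)
      (f' := fun t => -r t ^ q) ?_ ?_ <;>
      rw [interior_Ici] <;> intro t ht
    · exact (hφ t ht).hasDerivWithinAt
    · exact neg_nonpos.2 (Real.rpow_nonneg (hr_nonneg t ht.le) _)
  · refine .of_forall fun t => ?_
    simp only [negHalfSqNorm, hnorm, sq_abs]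
  · rw [Icoe_top, Measure.restrict_congr_set Ioi_ae_eq_Ici.symm]
    filter_upwards [ae_restrict_mem measurableSet_Ioi] with t (ht : 0 < t)
    refine ⟨-r t ^ q, (hφ t ht).hasDerivWithinAt, ?_⟩
    have hrt := hr_nonneg t ht.le
    rw [← Real.rpow_mul hrt, hpq.symm.sub_one_mul_conj, slope'_negHalfSqNorm, hnorm,
      abs_of_nonneg hrt, ENNReal.ofReal_rpow_of_nonneg hrt hpq.symm.nonneg,
      EReal.coe_ennreal_ofReal, max_eq_left (Real.rpow_nonneg hrt _)]
    norm_cast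
    exact le_of_eq (by linear_combination r t ^ q * hpq.inv_add_inv_eq_one)

theorem isCMS_negHalfSqNorm_rpow {p q : ℝ} (hpq : p.HolderConjugate q) (hp : 2 < p) {e : E}
    (he : ‖e‖ = 1) : ∃ du φ : ℝ → ℝ,
      IsCMS negHalfSqNorm p q ⊤ 0 (fun t => ((1 - q / p) * t) ^ (1 / (1 - q / p)) • e) du φ := by
  have hα : 0 < 1 - q / p := (hpq.one_sub_div_mem_Ioo hp).1
  refine ⟨_, _, isCMS_negHalfSqNorm_smul hpq he
    ((continuous_const.mul continuous_id).rpow_const fun _ => Or.inr (by positivity))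
    (by simp [hα.ne']) (fun t ht => by positivity) fun t ht => ?_⟩
  rw [show q - 1 = 1 - (1 - q / p) by rw [hpq.one_sub_div_eq]; ring]
  exact hasDerivAt_mul_rpow_inv hα ht

theorem isCMS_negHalfSqNorm_const [Nontrivial E] {p q : ℝ} (hpq : p.HolderConjugate q) :
    IsCMS negHalfSqNorm p q ⊤ (0 : E) (fun _ => 0) (fun _ => 0) (fun _ => 0) := by
  obtain ⟨e, he⟩ := exists_norm_eq E zero_le_one
  have hq : q - 1 ≠ 0 := hpq.symm.sub_one_ne_zero
  simpa [Real.zero_rpow hq] using isCMS_negHalfSqNorm_smul hpq he (r := fun _ => 0)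
    continuous_const rfl (fun _ _ => le_rfl) fun t _ => by
      simpa [Real.zero_rpow hq] using hasDerivAt_const t (0 : ℝ)

end NormedSpace

open RealInnerProductSpace in
theorem plConvex_negHalfSqNorm {E : Type*} [NormedAddCommGroup E] [InnerProductSpace ℝ E] :
    PLConvex (negHalfSqNorm (E := E)) 2 (-2) := by
  refine ⟨fun _ => 0, fun t _ => by norm_num, tendsto_const_nhds,
    ⟨1 / 2, by norm_num, by norm_num⟩, fun v₀ v₁ => ⟨fun t => v₀ + t • (v₁ - v₀), by fun_prop,
      by simp, by simp, fun t ht => ?_, fun t ht => ?_⟩⟩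
  · simp [dist_eq_norm, norm_smul, abs_of_nonneg ht.1]
  · simp only [negHalfSqNorm, zero_smul, add_zero, one_smul, add_sub_cancel, sub_zero, mul_one,
      Real.rpow_two]
    have hsegment : ‖v₀ + t • (v₁ - v₀)‖ ^ 2
        = (1 - t) * ‖v₀‖ ^ 2 + t * ‖v₁‖ ^ 2 - t * (1 - t) * ‖v₀ - v₁‖ ^ 2 := by
      rw [norm_add_sq_real, inner_smul_right, inner_sub_right, real_inner_self_eq_norm_sq,
        norm_smul, mul_pow, Real.norm_eq_abs, sq_abs, norm_sub_rev v₁ v₀, norm_sub_sq_real]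
      ring
    rw [dist_eq_norm, ← EReal.coe_mul, ← EReal.coe_mul, ← EReal.coe_add, ← EReal.coe_sub,
      EReal.coe_le_coe_iff, hsegment]
    nlinarith [mul_nonneg ht.1 (sq_nonneg ‖v₀ - v₁‖),
      mul_nonneg (mul_nonneg ht.1 ht.1) (sq_nonneg ‖v₀ - v₁‖)]

lemma norm_toLp_cos_sin (θ : ℝ) :
    ‖(WithLp.equiv 2 (Fin 2 → ℝ)).symm ![Real.cos θ, Real.sin θ]‖ = 1 := by
  simp [EuclideanSpace.norm_eq, Fin.sum_univ_two]

theorem stmt15 :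
    let f : EuclideanSpace ℝ (Fin 2) → EReal :=
      fun v => ((-(1 / 2) * ‖v‖ ^ 2 : ℝ) : EReal)
    let e : ℝ → EuclideanSpace ℝ (Fin 2) :=
      fun θ => (WithLp.equiv 2 (Fin 2 → ℝ)).symm ![Real.cos θ, Real.sin θ]
    PLConvex f 2 (-2) ∧
    slope' f 0 = 0 ∧
    (∀ p' q' : ℝ, 2 < p' → 1 / p' + 1 / q' = 1 →
      (0 < 1 - q' / p' ∧ 1 - q' / p' < 1) ∧
      (∀ θ ∈ Set.Ico 0 (2 * Real.pi), ∃ du φ : ℝ → ℝ,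
        IsCMS f p' q' ⊤ 0
          (fun t => (((1 - q' / p') * t) ^ (1 / (1 - q' / p'))) • e θ) du φ) ∧
      (∃ (u₁ u₂ : ℝ → EuclideanSpace ℝ (Fin 2)) (du₁ φ₁ du₂ φ₂ : ℝ → ℝ),
        IsCMS f p' q' ⊤ 0 u₁ du₁ φ₁ ∧ IsCMS f p' q' ⊤ 0 u₂ du₂ φ₂ ∧ u₁ ≠ u₂)) ∧
    (∀ p' q' : ℝ, 1 < p' → p' ≤ 2 → 1 / p' + 1 / q' = 1 →
      ∃ du φ : ℝ → ℝ, IsCMS f p' q' ⊤ 0 (fun _ => 0) du φ) := by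
  intro f e
  have hconj {p q : ℝ} (hp : 1 < p) (hpq : 1 / p + 1 / q = 1) : p.HolderConjugate q :=
    Real.holderConjugate_iff.2 ⟨hp, by simpa only [one_div] using hpq⟩
  refine ⟨plConvex_negHalfSqNorm, (slope'_negHalfSqNorm _).trans (by simp),
    fun p q hp hpq => ?_, fun p q hp _ hpq => ⟨_, _, isCMS_negHalfSqNorm_const (hconj hp hpq)⟩⟩
  have hpq' := hconj (by linarith) hpq
  have hα := hpq'.one_sub_div_mem_Ioo hp
  obtain ⟨du, φ, hcurve⟩ := isCMS_negHalfSqNorm_rpow hpq' hp (norm_toLp_cos_sin 0)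
  refine ⟨hα,
    fun θ _ => isCMS_negHalfSqNorm_rpow hpq' hp (norm_toLp_cos_sin θ),
    ⟨_, _, _, _, du, φ, isCMS_negHalfSqNorm_const hpq', hcurve, fun h => ?_⟩⟩
  have h1 := congrArg norm (congrFun h 1)
  simp [norm_smul] at h1
  exact (Real.rpow_pos_of_pos hα.1 _).ne' h1
end
end

section
/- Let (S,d) be complete, f proper lsc with |∂⁻f| a strong upper gradient, and u a p-curve of maximal slope on [0,∞) such that ∫₀^∞ |u'|(r) dr < ∞. Then u extends continuously to [0,∞], i.e. the limit ū := lim_{t→∞} u(t) exists in S; and if moreover liminf_{t→∞} |u'|(t) = 0 and |∂⁻f| is lower semicontinuous, then |∂⁻f|(ū) = 0. -/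
open Filter MeasureTheory Set Topology ENNReal NNReal

noncomputable section

variable {S : Type*} [MetricSpace S]

lemma integrableOn_Ici_of_lintegral_lt_top {g : ℝ → ℝ} {a : ℝ}
    (hg : ∀ T, IntegrableOn g (Icc a T)) (hg_nonneg : ∀ t ≥ a, 0 ≤ g t)
    (hfin : ∫⁻ r in Ici a, ENNReal.ofReal (g r) < ⊤) : IntegrableOn g (Ici a) := by
  have hcover : Ici a ⊆ ⋃ n : ℕ, Icc a n := fun t ht =>
    mem_iUnion.2 ⟨⌈t⌉₊, ht, Nat.le_ceil t⟩
  refine ⟨(AEStronglyMeasurable.iUnion fun n : ℕ => (hg n).1).mono_set hcover, ?_⟩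
  exact (hasFiniteIntegral_iff_ofReal ((ae_restrict_iff' measurableSet_Ici).2
    (ae_of_all _ hg_nonneg))).2 hfin

lemma cauchySeq_of_dist_le_intervalIntegral {X : Type*} [PseudoMetricSpace X]
    {v : ℝ → X} {g : ℝ → ℝ} {a : ℝ} (hg : IntegrableOn g (Ioi a))
    (hv : ∀ s t, a ≤ s → s ≤ t → dist (v s) (v t) ≤ ∫ r in s..t, g r) : CauchySeq v := by
  set F : ℝ → ℝ := fun t => ∫ r in a..t, g r
  have hF : CauchySeq F := (intervalIntegral_tendsto_integral_Ioi a hg tendsto_id).cauchySeq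
  have hle : ∀ s t, a ≤ s → a ≤ t → dist (v s) (v t) ≤ dist (F s) (F t) := by
    have hii : ∀ t, a ≤ t → IntervalIntegrable g volume a t := fun t ht =>
      (intervalIntegrable_iff_integrableOn_Ioc_of_le ht).2 (hg.mono_set Ioc_subset_Ioi_self)
    intro s t hs ht
    wlog hst : s ≤ t generalizing s t
    · rw [dist_comm, dist_comm (F s)]; exact this t s ht hs (le_of_not_ge hst)
    calc dist (v s) (v t) ≤ ∫ r in s..t, g r := hv s t hs hst
      _ = F t - F s := (intervalIntegral.integral_interval_sub_left (hii t ht) (hii s hs)).symm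
      _ ≤ dist (F s) (F t) := by rw [dist_comm, Real.dist_eq]; exact le_abs_self _
  rw [cauchySeq_iff_tendsto_dist_atTop_0] at hF ⊢
  refine squeeze_zero' (Eventually.of_forall fun _ => dist_nonneg) ?_ hF
  filter_upwards [eventually_ge_atTop (a, a)] with n hn using hle _ _ hn.1 hn.2

lemma AntitoneOn.not_ae_deriv_le_neg {φ : ℝ → ℝ} {a T c : ℝ} (hφ : AntitoneOn φ (Ici a))
    (hbdd : BddBelow (φ '' Ici a)) (hT : a ≤ T) (hc : 0 < c) :
    ¬ ∀ᵐ t ∂volume.restrict (Ici T), deriv φ t ≤ -c := by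
  intro hderiv
  obtain ⟨m, hm⟩ := hbdd
  have hmT : m ≤ φ T := hm ⟨T, hT, rfl⟩
  set N := T + (φ T - m) / c + 1
  have hTN : T ≤ N := by have := div_nonneg (sub_nonneg.2 hmT) hc.le; linarith
  have hmono : MonotoneOn (-φ) (uIcc T N) := by
    rw [uIcc_of_le hTN]
    exact fun x hx y hy hxy => neg_le_neg (hφ (hT.trans hx.1) (hT.trans hy.1) hxy)
  have hupper : ∫ t in T..N, deriv (-φ) t ≤ φ T - m := by
    have h := hmono.intervalIntegral_deriv_mem_uIcc
    rw [uIcc_of_le (by simpa using hφ hT (hT.trans hTN) hTN)] at h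
    have hmN : m ≤ φ N := hm ⟨N, hT.trans hTN, rfl⟩
    simp only [Pi.neg_apply] at h
    linarith [h.2]
  have hlower : ∫ _ in T..N, c ≤ ∫ t in T..N, deriv (-φ) t := by
    refine intervalIntegral.integral_mono_ae_restrict hTN intervalIntegrable_const
      hmono.intervalIntegrable_deriv ?_
    filter_upwards [ae_restrict_of_ae_restrict_of_subset Icc_subset_Ici_self hderiv] with t ht
    rw [deriv.neg]
    linarith
  have hcN : c * (N - T) = φ T - m + c := by
    simp only [N]; field_simp; ring
  rw [intervalIntegral.integral_const, smul_eq_mul, mul_comm] at hlower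
  linarith

lemma ne_top_and_le_of_coe_le_sub {x A b : ℝ} {S : ℝ≥0∞} (hA : 0 ≤ A) (hb : 0 < b)
    (h : (x : EReal) ≤ -(A : EReal) - (b : EReal) * (S : EReal)) :
    S ≠ ⊤ ∧ x ≤ -(b * S.toReal) := by
  have hS : S ≠ ⊤ := by
    rintro rfl
    rw [EReal.coe_ennreal_top, EReal.coe_mul_top_of_pos hb, sub_eq_add_neg, EReal.neg_top,
      EReal.add_bot] at h
    exact EReal.coe_ne_bot x (le_bot_iff.mp h)
  refine ⟨hS, ?_⟩
  rw [← ENNReal.ofReal_toReal hS, EReal.coe_ennreal_ofReal,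
    max_eq_left ENNReal.toReal_nonneg] at h
  have h' : x ≤ -A - b * S.toReal := by exact_mod_cast h
  linarith

lemma frequently_atTop_of_ae_restrict_Ici {P : ℝ → Prop} {a : ℝ}
    (h : ∀ᵐ t ∂volume.restrict (Ici a), P t) : ∃ᶠ t in atTop, P t := by
  rw [frequently_atTop]
  intro T
  have h' := ae_restrict_of_ae_restrict_of_subset (Ici_subset_Ici.2 (le_max_left a T)) h
  have : (ae (volume.restrict (Ici (max a T)))).NeBot := ae_neBot.2 (by simp)
  obtain ⟨t, ht, hPt⟩ := ((ae_restrict_mem measurableSet_Ici).and h').exists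
  exact ⟨t, (le_max_right a T).trans ht, hPt⟩

lemma AntitoneOn.bddBelow_image_Ici {φ : ℝ → ℝ} {a m : ℝ} (hφ : AntitoneOn φ (Ici a))
    (h : ∃ᶠ t in atTop, m ≤ φ t) : BddBelow (φ '' Ici a) := by
  refine ⟨m, ?_⟩
  rintro _ ⟨s, hs, rfl⟩
  obtain ⟨t, hmt, hst⟩ := (h.and_eventually (eventually_ge_atTop s)).exists
  exact hmt.trans (hφ hs (hs.trans hst) hst)

lemma LowerSemicontinuous.eq_zero_of_frequently_lt {X α : Type*} [TopologicalSpace X]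
    {g : X → ℝ≥0∞} (hg : LowerSemicontinuous g) {v : α → X} {l : Filter α} {x : X}
    (hv : Tendsto v l (𝓝 x)) (h : ∀ ε : ℝ, 0 < ε → ∃ᶠ t in l, g (v t) < ENNReal.ofReal ε) :
    g x = 0 := by
  by_contra hx
  obtain ⟨ε, -, hε0, hεx⟩ := ENNReal.lt_iff_exists_real_btwn.1 (pos_iff_ne_zero.2 hx)
  obtain ⟨t, hlt, hgt⟩ :=
    ((h ε (ENNReal.ofReal_pos.1 hε0)).and_eventually (hv.eventually (hg x _ hεx))).exists
  exact lt_asymm hlt hgt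

namespace IsCMS

variable {f : S → EReal} {p q : ℝ} {u₀ : S} {u : ℝ → S} {du φ : ℝ → ℝ}

lemma isACCurveOn_Icc (hu : IsCMS f p q ⊤ u₀ u du φ) (T : ℝ) :
    IsACCurveOn u (Icc 0 T) du :=
  hu.ac T (Icoe_top ▸ Icc_subset_Ici_self)

lemma cauchySeq (hu : IsCMS f p q ⊤ u₀ u du φ)
    (hint : ∫⁻ r in Ici (0 : ℝ), ENNReal.ofReal (du r) < ⊤) : CauchySeq u := by
  have hac := hu.isACCurveOn_Icc
  have hdu : IntegrableOn du (Ici 0) := integrableOn_Ici_of_lintegral_lt_top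
    (fun T => (hac T).2.1) (fun t ht => (hac t).1 t ⟨ht, le_rfl⟩) hint
  exact cauchySeq_of_dist_le_intervalIntegral (hdu.mono_set Ioi_subset_Ici_self)
    fun s t hs hst => (hac t).2.2.1 s ⟨hs, hst⟩ t ⟨hs.trans hst, le_rfl⟩ hst

lemma bddBelow_of_tendsto (hu : IsCMS f p q ⊤ u₀ u du φ) (hlsc : LowerSemicontinuous f)
    {ub : S} (hub : Tendsto u atTop (𝓝 ub)) (hbot : f ub ≠ ⊥) : BddBelow (φ '' Ici 0) := by
  obtain ⟨m, -, hm⟩ := EReal.exists_between_coe_real (bot_lt_iff_ne_bot.2 hbot)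
  have hfreq : ∃ᶠ t in atTop, (φ t : EReal) = f (u t) :=
    frequently_atTop_of_ae_restrict_Ici (Icoe_top ▸ hu.eq_ae)
  refine (Icoe_top ▸ hu.anti).bddBelow_image_Ici (m := m) <|
    (hfreq.and_eventually (hub.eventually (hlsc ub m hm))).mono fun t ⟨heq, hlt⟩ => ?_
  have hlt : (m : EReal) < φ t := heq ▸ hlt
  exact_mod_cast hlt.le

lemma frequently_slope_lt (hu : IsCMS f p q ⊤ u₀ u du φ) (hp : 0 ≤ p) (hq : 0 < q)
    (hbdd : BddBelow (φ '' Ici 0)) {ε : ℝ} (hε : 0 < ε) :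
    ∃ᶠ t in atTop, slope' f (u t) < ENNReal.ofReal ε := by
  intro hev
  obtain ⟨T, hT⟩ := eventually_atTop.1 hev
  have hT1 : (1 : ℝ) ≤ max T 1 := le_max_right T 1
  refine (Icoe_top ▸ hu.anti).not_ae_deriv_le_neg hbdd (zero_le_one.trans hT1)
    (c := 1 / q * ε ^ q) (by positivity) ?_
  filter_upwards [ae_restrict_of_ae_restrict_of_subset (Ici_subset_Ici.2 (zero_le_one.trans hT1))
    (Icoe_top ▸ hu.ineq), ae_restrict_mem measurableSet_Ici] with t ⟨φ', hφ', hle⟩ ht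
  have ht0 : 0 < t := zero_lt_one.trans_le (hT1.trans ht)
  have hdu : 0 ≤ du t := (hu.isACCurveOn_Icc t).1 t ⟨ht0.le, le_rfl⟩
  obtain ⟨hfin, hφ'le⟩ := ne_top_and_le_of_coe_le_sub
    (mul_nonneg (by positivity) (Real.rpow_nonneg hdu p)) (by positivity) hle
  have hslope : ε ^ q ≤ (slope' f (u t) ^ q).toReal := by
    refine (ENNReal.ofReal_le_iff_le_toReal hfin).1 ?_
    rw [← ENNReal.ofReal_rpow_of_nonneg hε.le hq.le]
    exact ENNReal.rpow_le_rpow (not_lt.1 (hT t ((le_max_left T 1).trans ht))) hq.le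
  rw [(hφ'.hasDerivAt (Ici_mem_nhds ht0)).deriv]
  have := mul_le_mul_of_nonneg_left hslope (one_div_pos.2 hq).le
  linarith

end IsCMS

theorem stmt19_general [CompleteSpace S] (f : S → EReal)
    (hbot : ∀ v, f v ≠ ⊥) (hlsc : LowerSemicontinuous f)
    (p q : ℝ) (hp : 1 < p) (hpq : 1 / p + 1 / q = 1)
    (u₀ : S) (u : ℝ → S) (du : ℝ → ℝ) (φ : ℝ → ℝ)
    (hu : IsCMS f p q ⊤ u₀ u du φ)
    (hint : (∫⁻ r in Set.Ici (0:ℝ), ENNReal.ofReal (du r)) < ⊤) :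
    ∃ ub : S, Filter.Tendsto u Filter.atTop (𝓝 ub) ∧
      (Filter.liminf (fun t => ENNReal.ofReal (du t)) Filter.atTop = 0 →
        LowerSemicontinuous (slope' f) → slope' f ub = 0) := by
  have hq : 0 < q := one_div_pos.1 (by linarith [(div_lt_one (by linarith : (0:ℝ) < p)).2 hp])
  obtain ⟨ub, hub⟩ := cauchySeq_tendsto_of_complete (hu.cauchySeq hint)
  have hbdd := hu.bddBelow_of_tendsto hlsc hub (hbot ub)
  exact ⟨ub, hub, fun _ hslope => hslope.eq_zero_of_frequently_lt hub
    fun _ hε => hu.frequently_slope_lt (by linarith) hq hbdd hε⟩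

theorem stmt19 [CompleteSpace S] (f : S → EReal) (hproper : ∃ v, f v ≠ ⊤)
    (hbot : ∀ v, f v ≠ ⊥) (hlsc : LowerSemicontinuous f)
    (p q : ℝ) (hp : 1 < p) (hpq : 1 / p + 1 / q = 1)
    (hsug : StrongUpperGradient f (slope' f))
    (u₀ : S) (u : ℝ → S) (du : ℝ → ℝ) (φ : ℝ → ℝ)
    (hu : IsCMS f p q ⊤ u₀ u du φ)
    (hint : (∫⁻ r in Set.Ici (0:ℝ), ENNReal.ofReal (du r)) < ⊤) :
    ∃ ub : S, Filter.Tendsto u Filter.atTop (𝓝 ub) ∧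
      (Filter.liminf (fun t => ENNReal.ofReal (du t)) Filter.atTop = 0 →
        LowerSemicontinuous (slope' f) → slope' f ub = 0) :=
  stmt19_general f hbot hlsc p q hp hpq u₀ u du φ hu hint
end
end
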